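/- arXiv:2507.10931 — 5 statements merged into one kernel-verified Lean document; each statement's English description precedes it below -/
import Mathlib

section
/- In a compact Hausdorff right topological semigroup S, for every idempotent e there exists a minimal idempotent f with f ⪯ e, i.e., f*e = e*f = f and any idempotent g ⪯ f equals f. -/
/-!
Among the closed nonempty left ideals `L` with `x * e = x` for all `x ∈ L` (e.g. `S * e`),
compactness and Zorn's lemma give a minimal one, and by Ellis–Numakura `L` contains an
idempotent `f'`; then `f := e * f'` is an idempotent below `e`. If `g ⪯ f`, then `g ∈ L`, and
`L * g` is again such an ideal inside `L`, so `L * g = L` by minimality. Hence `g` is a right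
identity on `L`, and `f = f * g = g`.
-/

open Set

structure IsFixedClosedLeftIdeal {S : Type*} [Mul S] [TopologicalSpace S] (e : S) (L : Set S) :
    Prop where
  isClosed : IsClosed L
  nonempty : L.Nonempty
  mul_mem : ∀ s, ∀ x ∈ L, s * x ∈ L
  mul_right_eq : ∀ x ∈ L, x * e = x

namespace IsFixedClosedLeftIdeal

variable {S : Type*} [Semigroup S] [TopologicalSpace S]

theorem range_mul_right [CompactSpace S] [T2Space S] {e : S} (he : e * e = e)
    (hcont : Continuous (· * e)) : IsFixedClosedLeftIdeal e (range (· * e)) where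
  isClosed := isCompact_range hcont |>.isClosed
  nonempty := range_nonempty_iff_nonempty.mpr ⟨e⟩
  mul_mem := by
    rintro s _ ⟨t, rfl⟩
    exact ⟨s * t, mul_assoc s t e⟩
  mul_right_eq := by
    rintro _ ⟨t, rfl⟩
    simp only [mul_assoc, he]

theorem image_mul_right [CompactSpace S] [T2Space S] {e g : S} {L : Set S}
    (hL : IsFixedClosedLeftIdeal e L) (hcont : Continuous (· * g)) (hge : g * e = g) :
    IsFixedClosedLeftIdeal e ((· * g) '' L) where
  isClosed := hcont.isClosedMap _ hL.isClosed
  nonempty := hL.nonempty.image _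
  mul_mem := by
    rintro s _ ⟨x, hx, rfl⟩
    exact ⟨s * x, hL.mul_mem s x hx, mul_assoc s x g⟩
  mul_right_eq := by
    rintro _ ⟨x, hx, rfl⟩
    rw [mul_assoc, hge]

theorem sInter_of_isChain [CompactSpace S] {e : S} {c : Set (Set S)}
    (hcF : ∀ L ∈ c, IsFixedClosedLeftIdeal e L) (hc : IsChain (· ⊆ ·) c) (hne : c.Nonempty) :
    IsFixedClosedLeftIdeal e (⋂₀ c) where
  isClosed := isClosed_sInter fun L hL => (hcF L hL).isClosed
  nonempty :=
    have : Nonempty c := hne.coe_sort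
    IsCompact.nonempty_sInter_of_directed_nonempty_isCompact_isClosed (IsChain.directedOn (r := fun s t : Set S => s ⊇ t) hc.symm)
      (fun L hL => (hcF L hL).nonempty) (fun L hL => (hcF L hL).isClosed.isCompact)
      (fun L hL => (hcF L hL).isClosed)
  mul_mem s x hx := mem_sInter.mpr fun L hL => (hcF L hL).mul_mem s x (hx L hL)
  mul_right_eq x hx := (hcF _ hne.some_mem).mul_right_eq x (hx _ hne.some_mem)

theorem exists_minimal [CompactSpace S] [T2Space S] {e : S} (he : e * e = e)
    (hcont : Continuous (· * e)) : ∃ L, Minimal (IsFixedClosedLeftIdeal e) L := by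
  obtain ⟨L, -, hL⟩ := zorn_superset_nonempty {L | IsFixedClosedLeftIdeal e L}
    (fun c hcF hc hne => ⟨⋂₀ c, sInter_of_isChain hcF hc hne, fun _ => sInter_subset_of_mem⟩)
    _ (range_mul_right he hcont)
  exact ⟨L, hL⟩

theorem mul_eq_self_of_minimal [CompactSpace S] [T2Space S] {e g : S} {L : Set S}
    (hL : Minimal (IsFixedClosedLeftIdeal e) L) (hcont : Continuous (· * g)) (hgL : g ∈ L)
    (hg : g * g = g) (hge : g * e = g) {y : S} (hy : y ∈ L) : y * g = y := by
  have hLg : (· * g) '' L = L :=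
    hL.eq_of_subset (hL.prop.image_mul_right hcont hge)
      (image_subset_iff.mpr fun x _ => hL.prop.mul_mem x g hgL)
  obtain ⟨x, -, rfl⟩ : y ∈ (· * g) '' L := by rwa [hLg]
  rw [mul_assoc, hg]

end IsFixedClosedLeftIdeal

theorem stmt_5_general {S : Type*} [Semigroup S] [TopologicalSpace S] [CompactSpace S]
    [T2Space S]
    (hright : ∀ t : S, Continuous fun s : S => s * t)
    (e : S) (he : e * e = e) :
    ∃ f : S, f * f = f ∧ f * e = f ∧ e * f = f ∧
      ∀ g : S, g * g = g → g * f = g → f * g = g → g = f := by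
  obtain ⟨L, hL⟩ := IsFixedClosedLeftIdeal.exists_minimal he (hright e)
  obtain ⟨f', hf'L, hf'⟩ := exists_idempotent_in_compact_subsemigroup hright L hL.prop.nonempty
    hL.prop.isClosed.isCompact fun x _ y hy => hL.prop.mul_mem x y hy
  have hf'e : f' * e = f' := hL.prop.mul_right_eq f' hf'L
  have hfL : e * f' ∈ L := hL.prop.mul_mem e f' hf'L
  have hfe : e * f' * e = e * f' := by rw [mul_assoc, hf'e]
  refine ⟨e * f', ?_, hfe, by rw [← mul_assoc, he], fun g hg hgf hfg => ?_⟩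
  · rw [← mul_assoc, hfe, mul_assoc, hf']
  have hgL : g ∈ L := hgf ▸ hL.prop.mul_mem g _ hfL
  have hge : g * e = g := by rw [← hgf, mul_assoc, hfe]
  rw [← hfg, IsFixedClosedLeftIdeal.mul_eq_self_of_minimal hL (hright g) hgL hg hge hfL]

/-- In a compact Hausdorff right topological semigroup, below every idempotent
there is a minimal idempotent. -/
theorem stmt_5 {S : Type*} [Semigroup S] [TopologicalSpace S] [CompactSpace S]
    [T2Space S] [Nonempty S]
    (hright : ∀ t : S, Continuous fun s : S => s * t)
    (e : S) (he : e * e = e) :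
    ∃ f : S, f * f = f ∧ f * e = f ∧ e * f = f ∧
      ∀ g : S, g * g = g → g * f = g → f * g = g → g = f :=
  stmt_5_general hright e he
end

section
/- Let S be a compact affine right topological semigroup (a compact convex subset of a locally convex topological vector space with an associative multiplication that is affine and continuous in the left variable). Then every minimal closed left ideal J of S is a left zero semigroup: x*y = x for all x, y ∈ J. In particular every element of a minimal closed left ideal is idempotent. -/
/-!
For `y ∈ J`, right translation `T x = x * y` is a continuous affine self-map of `S`. Such a map
has a fixed point (the Markov–Kakutani argument): the Cesàro means `cₙ` of an orbit satisfy
`T cₙ - cₙ = (T^[n+1] x - x) / (n + 1)`, which tends to `0` because `S - S` is bounded, so any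
cluster point of `(cₙ)` is fixed. The fixed points of `T` form a nonempty closed left ideal, and
it lies in `J` because `x = x * y ∈ S * J ⊆ J`. By minimality it is all of `J`, i.e. `x * y = x`
for all `x, y ∈ J`.
-/

open Filter Topology Pointwise

theorem IsCompact.exists_eq_of_tendsto_sub_nhds_zero {V : Type*} [AddCommGroup V]
    [TopologicalSpace V] [IsTopologicalAddGroup V] [T2Space V]
    {ι : Type*} {l : Filter ι} [l.NeBot] {S : Set V} (hS : IsCompact S) {T : V → V}
    (hT : ContinuousOn T S) {c : ι → V} (hc : ∀ᶠ n in l, c n ∈ S)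
    (hlim : Tendsto (fun n => T (c n) - c n) l (𝓝 0)) : ∃ x ∈ S, T x = x := by
  obtain ⟨x, hxS, hx⟩ := hS.exists_mapClusterPt (le_principal_iff.2 hc)
  have hcont : Tendsto (fun z => T z - z) (𝓝 x ⊓ map c l) (𝓝 (T x - x)) :=
    ((hT x hxS).sub continuousWithinAt_id).mono_left
      (inf_le_inf_left _ (le_principal_iff.2 hc))
  have hcluster : MapClusterPt (T x - x) l (fun n => T (c n) - c n) := hx.tendsto_comp' hcont
  exact ⟨x, hxS, sub_eq_zero.1 (eq_of_nhds_neBot (hcluster.neBot.mono (inf_le_inf_left _ hlim)))⟩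

section CesaroMean

variable {V : Type*} [AddCommGroup V] [Module ℝ V]

/-- The mean of `x, T x, …, T^[n] x`, written recursively as a convex combination of two points
so that only the two-point affinity of `T` is needed. -/
noncomputable def cesaroMean (T : V → V) (x : V) : ℕ → V
  | 0 => x
  | n + 1 => ((n + 1 : ℝ) / (n + 2)) • cesaroMean T x n + (n + 2 : ℝ)⁻¹ • T^[n + 1] x

lemma cesaroMean_coeffs (n : ℕ) :
    0 ≤ (n + 1 : ℝ) / (n + 2) ∧ 0 ≤ (n + 2 : ℝ)⁻¹ ∧ (n + 1 : ℝ) / (n + 2) + (n + 2 : ℝ)⁻¹ = 1 :=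
  ⟨by positivity, by positivity, by field_simp; ring⟩

lemma cesaroMean_mem {S : Set V} (hS : Convex ℝ S) {T : V → V} (hTS : Set.MapsTo T S S)
    {x : V} (hx : x ∈ S) (n : ℕ) : cesaroMean T x n ∈ S := by
  induction n with
  | zero => exact hx
  | succ n ih =>
    obtain ⟨ha, hb, hab⟩ := cesaroMean_coeffs n
    exact hS ih (hTS.iterate (n + 1) hx) ha hb hab

variable {S : Set V} {T : V → V}

lemma apply_cesaroMean_sub (hS : Convex ℝ S) (hTS : Set.MapsTo T S S)
    (hT : ∀ a b : ℝ, 0 ≤ a → 0 ≤ b → a + b = 1 →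
      ∀ x ∈ S, ∀ x' ∈ S, T (a • x + b • x') = a • T x + b • T x')
    {x : V} (hx : x ∈ S) (n : ℕ) :
    T (cesaroMean T x n) - cesaroMean T x n = ((n : ℝ) + 1)⁻¹ • (T^[n + 1] x - x) := by
  induction n with
  | zero => simp [cesaroMean]
  | succ n ih =>
    obtain ⟨ha, hb, hab⟩ := cesaroMean_coeffs n
    have hTc : T (cesaroMean T x n) = cesaroMean T x n + ((n : ℝ) + 1)⁻¹ • (T^[n + 1] x - x) := by
      rw [← ih]; abel
    rw [cesaroMean, hT _ _ ha hb hab _ (cesaroMean_mem hS hTS hx n) _ (hTS.iterate _ hx), hTc,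
      ← Function.iterate_succ_apply' T]
    have hcoeff : (n + 1 : ℝ) / (n + 2) * ((n : ℝ) + 1)⁻¹ = (n + 2 : ℝ)⁻¹ := by field_simp
    rw [smul_add, smul_smul, hcoeff]
    push_cast
    module

end CesaroMean

section FixedPoint

variable {V : Type*} [AddCommGroup V] [Module ℝ V] [TopologicalSpace V] [IsTopologicalAddGroup V]
  [ContinuousSMul ℝ V] {S : Set V} {T : V → V}

lemma tendsto_apply_cesaroMean_sub (hSc : IsCompact S) (hS : Convex ℝ S)
    (hTS : Set.MapsTo T S S)
    (hT : ∀ a b : ℝ, 0 ≤ a → 0 ≤ b → a + b = 1 →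
      ∀ x ∈ S, ∀ x' ∈ S, T (a • x + b • x') = a • T x + b • T x')
    {x : V} (hx : x ∈ S) :
    Tendsto (fun n => T (cesaroMean T x n) - cesaroMean T x n) atTop (𝓝 0) := by
  have hbdd : Bornology.IsVonNBounded ℝ S := hSc.isVonNBounded ℝ
  have hinv : Tendsto (fun n : ℕ => ((n : ℝ) + 1)⁻¹) atTop (𝓝 0) :=
    tendsto_one_div_add_atTop_nhds_zero_nat.congr fun n => one_div _
  refine ((Bornology.isVonNBounded_sub.2 (.inr (.inr ⟨hbdd, hbdd⟩))).smul_tendsto_zero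
    (.of_forall fun n => Set.sub_mem_sub (hTS.iterate (n + 1) hx) hx) hinv).congr fun n => ?_
  exact (apply_cesaroMean_sub hS hTS hT hx n).symm

theorem exists_fixedPoint_of_affine [T2Space V] (hSc : IsCompact S) (hS : Convex ℝ S)
    (hSne : S.Nonempty) (hTS : Set.MapsTo T S S) (hTc : ContinuousOn T S)
    (hT : ∀ a b : ℝ, 0 ≤ a → 0 ≤ b → a + b = 1 →
      ∀ x ∈ S, ∀ x' ∈ S, T (a • x + b • x') = a • T x + b • T x') :
    ∃ x ∈ S, T x = x :=
  let ⟨_, hx⟩ := hSne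
  hSc.exists_eq_of_tendsto_sub_nhds_zero hTc (.of_forall (cesaroMean_mem hS hTS hx))
    (tendsto_apply_cesaroMean_sub hSc hS hTS hT hx)

end FixedPoint

lemma ContinuousOn.isClosed_sep_eq_self {X : Type*} [TopologicalSpace X] [T2Space X] {S : Set X}
    (hS : IsClosed S) {T : X → X} (hT : ContinuousOn T S) : IsClosed {x ∈ S | T x = x} :=
  (hT.prodMk continuousOn_id).preimage_isClosed_of_isClosed hS isClosed_diagonal

theorem stmt_9_general {V : Type*} [AddCommGroup V] [Module ℝ V] [TopologicalSpace V]
    [IsTopologicalAddGroup V] [ContinuousSMul ℝ V] [T2Space V]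
    (S : Set V) (hScomp : IsCompact S) (hSconv : Convex ℝ S)
    (m : V → V → V)
    (hmem : ∀ x ∈ S, ∀ y ∈ S, m x y ∈ S)
    (hassoc : ∀ x ∈ S, ∀ y ∈ S, ∀ z ∈ S, m (m x y) z = m x (m y z))
    (haff : ∀ y ∈ S, ∀ a b : ℝ, 0 ≤ a → 0 ≤ b → a + b = 1 →
      ∀ x ∈ S, ∀ x' ∈ S, m (a • x + b • x') y = a • m x y + b • m x' y)
    (hcont : ∀ y ∈ S, ContinuousOn (fun x => m x y) S)
    (J : Set V) (hJ : J ⊆ S) (hJne : J.Nonempty)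
    (hJideal : ∀ x ∈ S, ∀ j ∈ J, m x j ∈ J)
    (hJmin : ∀ J' : Set V, J' ⊆ J → IsClosed J' → J'.Nonempty →
      (∀ x ∈ S, ∀ j ∈ J', m x j ∈ J') → J' = J) :
    (∀ x ∈ J, ∀ y ∈ J, m x y = x) ∧ (∀ x ∈ J, m x x = x) := by
  have hfix : ∀ y ∈ J, {x ∈ S | m x y = x} = J := by
    intro y hy
    have hyS := hJ hy
    refine hJmin _ ?_ ((hcont y hyS).isClosed_sep_eq_self hScomp.isClosed) ?_ ?_
    · rintro x ⟨hxS, hx⟩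
      exact hx ▸ hJideal x hxS y hy
    · exact exists_fixedPoint_of_affine hScomp hSconv (hJne.mono hJ)
        (fun x hx => hmem x hx y hyS) (hcont y hyS) (haff y hyS)
    · rintro s hs x ⟨hxS, hx⟩
      exact ⟨hmem s hs x hxS, by rw [hassoc s hs x hxS y hyS, hx]⟩
  have hleft : ∀ x ∈ J, ∀ y ∈ J, m x y = x := fun x hx y hy =>
    (show x ∈ {x ∈ S | m x y = x} from (hfix y hy).symm ▸ hx).2
  exact ⟨hleft, fun x hx => hleft x hx x hx⟩

/-- In a compact affine right topological semigroup, every minimal closed left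
ideal is a left zero semigroup; in particular all its elements are idempotent. -/
theorem stmt_9 {V : Type*} [AddCommGroup V] [Module ℝ V] [TopologicalSpace V]
    [IsTopologicalAddGroup V] [ContinuousSMul ℝ V] [T2Space V]
    [LocallyConvexSpace ℝ V]
    (S : Set V) (hScomp : IsCompact S) (hSconv : Convex ℝ S)
    (hSne : S.Nonempty)
    (m : V → V → V)
    (hmem : ∀ x ∈ S, ∀ y ∈ S, m x y ∈ S)
    (hassoc : ∀ x ∈ S, ∀ y ∈ S, ∀ z ∈ S, m (m x y) z = m x (m y z))
    (haff : ∀ y ∈ S, ∀ a b : ℝ, 0 ≤ a → 0 ≤ b → a + b = 1 →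
      ∀ x ∈ S, ∀ x' ∈ S, m (a • x + b • x') y = a • m x y + b • m x' y)
    (hcont : ∀ y ∈ S, ContinuousOn (fun x => m x y) S)
    (J : Set V) (hJ : J ⊆ S) (hJcl : IsClosed J) (hJne : J.Nonempty)
    (hJideal : ∀ x ∈ S, ∀ j ∈ J, m x j ∈ J)
    (hJmin : ∀ J' : Set V, J' ⊆ J → IsClosed J' → J'.Nonempty →
      (∀ x ∈ S, ∀ j ∈ J', m x j ∈ J') → J' = J) :
    (∀ x ∈ J, ∀ y ∈ J, m x y = x) ∧ (∀ x ∈ J, m x x = x) :=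
  stmt_9_general S hScomp hSconv m hmem hassoc haff hcont J hJ hJne hJideal hJmin
end

section
/- Let S be a compact affine right topological semigroup and e ∈ S a minimal idempotent. Then e*x*e = e for all x ∈ S. -/
/-!
The element `b = e x e` satisfies `e b = b e = b`. Right multiplication by `b` is a continuous
affine self-map of the compact convex set `S`, so the Cesàro averages of the orbit of `b`
produce a fixed point `p b = p`. The points fixed by right multiplication by `b` form a nonempty
compact subsemigroup, which contains an idempotent `r` by the Ellis–Numakura lemma. Since
`r e = r b e = r b = r`, the product `e r` is an idempotent below `e`, so `e r = e` by minimality,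
and then `b = e b = e r b = e r = e`.
-/

open Filter Topology Set

section CesaroAverage

variable {V : Type*} [AddCommGroup V] [Module ℝ V]

/-- `cesaroAverage T x n = (n + 1)⁻¹ • ∑ k ≤ n, T^[k] x`, written as a chain of binary convex
combinations so that a map that is only affine on a convex set can be pushed through it. -/
noncomputable def cesaroAverage (T : V → V) (x : V) : ℕ → V
  | 0 => x
  | n + 1 => ((n + 1 : ℝ) / (n + 2)) • cesaroAverage T x n + (1 / (n + 2 : ℝ)) • T^[n + 1] x

variable {S : Set V} {T : V → V} {x : V}

private lemma cesaro_weights_nonneg (n : ℕ) :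
    0 ≤ ((n + 1 : ℝ) / (n + 2)) ∧ 0 ≤ (1 / (n + 2 : ℝ)) :=
  ⟨by positivity, by positivity⟩

private lemma cesaro_weights_sum (n : ℕ) : ((n + 1 : ℝ) / (n + 2)) + 1 / (n + 2 : ℝ) = 1 := by
  field_simp
  ring

lemma cesaroAverage_mem (hS : Convex ℝ S) (hT : MapsTo T S S) (hx : x ∈ S) (n : ℕ) :
    cesaroAverage T x n ∈ S := by
  induction n with
  | zero => exact hx
  | succ n ih =>
    exact hS ih (hT.iterate (n + 1) hx) (cesaro_weights_nonneg n).1 (cesaro_weights_nonneg n).2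
      (cesaro_weights_sum n)

lemma map_cesaroAverage (hS : Convex ℝ S) (hT : MapsTo T S S)
    (hTaff : ∀ a b : ℝ, 0 ≤ a → 0 ≤ b → a + b = 1 →
      ∀ y ∈ S, ∀ y' ∈ S, T (a • y + b • y') = a • T y + b • T y')
    (hx : x ∈ S) (n : ℕ) :
    T (cesaroAverage T x n) = cesaroAverage T x n + (1 / (n + 1 : ℝ)) • (T^[n + 1] x - x) := by
  induction n with
  | zero => simp [cesaroAverage]
  | succ n ih =>
    rw [cesaroAverage, hTaff _ _ (cesaro_weights_nonneg n).1 (cesaro_weights_nonneg n).2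
      (cesaro_weights_sum n) _ (cesaroAverage_mem hS hT hx n) _ (hT.iterate (n + 1) hx), ih,
      ← Function.iterate_succ_apply' T (n + 1)]
    push_cast
    match_scalars <;> field_simp <;> ring

end CesaroAverage

/-- Single-map case of the Markov–Kakutani theorem. -/
theorem exists_fixedPoint_of_affine_s11 {V : Type*} [AddCommGroup V] [Module ℝ V]
    [TopologicalSpace V] [IsTopologicalAddGroup V] [ContinuousSMul ℝ V] [T2Space V]
    {S : Set V} (hScomp : IsCompact S) (hSconv : Convex ℝ S) (hSne : S.Nonempty)
    {T : V → V} (hT : MapsTo T S S) (hTcont : ContinuousOn T S)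
    (hTaff : ∀ a b : ℝ, 0 ≤ a → 0 ≤ b → a + b = 1 →
      ∀ y ∈ S, ∀ y' ∈ S, T (a • y + b • y') = a • T y + b • T y') :
    ∃ p ∈ S, T p = p := by
  obtain ⟨x, hx⟩ := hSne
  have hdisp : Tendsto (fun n => T (cesaroAverage T x n) - cesaroAverage T x n) atTop (𝓝 0) := by
    simp only [map_cesaroAverage hSconv hT hTaff hx, add_sub_cancel_left]
    have hbdd : Bornology.IsVonNBounded ℝ ((fun q : V × V => q.1 - q.2) '' S ×ˢ S) :=
      ((hScomp.prod hScomp).image (continuous_fst.sub continuous_snd)).isVonNBounded ℝ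
    exact hbdd.smul_tendsto_zero
      (Eventually.of_forall fun n => ⟨_, mk_mem_prod (hT.iterate (n + 1) hx) hx, rfl⟩)
      tendsto_one_div_add_atTop_nhds_zero_nat
  have himage : IsClosed ((fun y => T y - y) '' S) :=
    (hScomp.image_of_continuousOn (hTcont.sub continuousOn_id)).isClosed
  obtain ⟨p, hpS, hp⟩ := himage.mem_of_tendsto hdisp
    (Eventually.of_forall fun n => mem_image_of_mem _ (cesaroAverage_mem hSconv hT hx n))
  exact ⟨p, hpS, sub_eq_zero.mp hp⟩

theorem exists_idempotent_of_isCompact {V : Type*} [TopologicalSpace V] [T2Space V]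
    {F : Set V} (hFcomp : IsCompact F) (hFne : F.Nonempty) (m : V → V → V)
    (hmem : ∀ x ∈ F, ∀ y ∈ F, m x y ∈ F)
    (hassoc : ∀ x ∈ F, ∀ y ∈ F, ∀ z ∈ F, m (m x y) z = m x (m y z))
    (hcont : ∀ y ∈ F, ContinuousOn (fun x => m x y) F) :
    ∃ r ∈ F, m r r = r := by
  let : Semigroup F :=
    { mul := fun x y => ⟨m x y, hmem _ x.2 _ y.2⟩
      mul_assoc := fun x y z => Subtype.ext (hassoc _ x.2 _ y.2 _ z.2) }
  have : CompactSpace F := isCompact_iff_compactSpace.mp hFcomp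
  have : Nonempty F := hFne.to_subtype
  obtain ⟨r, hr⟩ := exists_idempotent_of_compact_t2_of_continuous_mul_left fun y : F =>
    (hcont y y.2).domRestrict.subtype_mk _
  exact ⟨r, r.2, congrArg Subtype.val hr⟩

theorem exists_idempotent_mul_eq_self {V : Type*} [AddCommGroup V] [Module ℝ V]
    [TopologicalSpace V] [IsTopologicalAddGroup V] [ContinuousSMul ℝ V] [T2Space V]
    {S : Set V} (hScomp : IsCompact S) (hSconv : Convex ℝ S) (m : V → V → V)
    (hmem : ∀ x ∈ S, ∀ y ∈ S, m x y ∈ S)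
    (hassoc : ∀ x ∈ S, ∀ y ∈ S, ∀ z ∈ S, m (m x y) z = m x (m y z))
    (hcont : ∀ y ∈ S, ContinuousOn (fun x => m x y) S) {b : V} (hbS : b ∈ S)
    (haff : ∀ a c : ℝ, 0 ≤ a → 0 ≤ c → a + c = 1 →
      ∀ x ∈ S, ∀ x' ∈ S, m (a • x + c • x') b = a • m x b + c • m x' b) :
    ∃ r ∈ S, m r r = r ∧ m r b = r := by
  obtain ⟨p, hpS, hp⟩ := exists_fixedPoint_of_affine_s11 hScomp hSconv ⟨b, hbS⟩
    (fun y hy => hmem y hy b hbS) (hcont b hbS) haff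
  obtain ⟨r, ⟨hrS, hrb⟩, hrr⟩ := exists_idempotent_of_isCompact (m := m)
    (F := {y ∈ S | m y b = y}) (hScomp.of_isClosed_subset
      (hScomp.isClosed.isClosed_eq (hcont b hbS) continuousOn_id) (sep_subset _ _))
    ⟨p, hpS, hp⟩
    (fun y ⟨hyS, _⟩ z ⟨hzS, hzb⟩ => ⟨hmem _ hyS _ hzS, by rw [hassoc _ hyS _ hzS _ hbS, hzb]⟩)
    (fun y hy z hz w hw => hassoc _ hy.1 _ hz.1 _ hw.1)
    (fun y hy => (hcont y hy.1).mono (sep_subset _ _))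
  exact ⟨r, hrS, hrr, hrb⟩

theorem stmt_11_general {V : Type*} [AddCommGroup V] [Module ℝ V] [TopologicalSpace V]
    [IsTopologicalAddGroup V] [ContinuousSMul ℝ V] [T2Space V]
    (S : Set V) (hScomp : IsCompact S) (hSconv : Convex ℝ S)
    (m : V → V → V)
    (hmem : ∀ x ∈ S, ∀ y ∈ S, m x y ∈ S)
    (hassoc : ∀ x ∈ S, ∀ y ∈ S, ∀ z ∈ S, m (m x y) z = m x (m y z))
    (haff : ∀ y ∈ S, ∀ a b : ℝ, 0 ≤ a → 0 ≤ b → a + b = 1 →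
      ∀ x ∈ S, ∀ x' ∈ S, m (a • x + b • x') y = a • m x y + b • m x' y)
    (hcont : ∀ y ∈ S, ContinuousOn (fun x => m x y) S)
    (e : V) (heS : e ∈ S) (he : m e e = e)
    (hemin : ∀ g ∈ S, m g g = g → m g e = g → m e g = g → g = e) :
    ∀ x ∈ S, m (m e x) e = e := by
  intro x hx
  set b := m (m e x) e
  have hbS : b ∈ S := hmem _ (hmem _ heS _ hx) _ heS
  have hbe : m b e = b := by rw [hassoc _ (hmem _ heS _ hx) _ heS _ heS, he]
  have heb : m e b = b := by
    rw [← hassoc _ heS _ (hmem _ heS _ hx) _ heS, ← hassoc _ heS _ heS _ hx, he]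
  obtain ⟨r, hrS, hrr, hrb⟩ :=
    exists_idempotent_mul_eq_self hScomp hSconv m hmem hassoc hcont hbS (haff b hbS)
  have hre : m r e = r := by rw [← hrb, hassoc _ hrS _ hbS _ heS, hbe]
  have hers : m e r ∈ S := hmem _ heS _ hrS
  have her : m e r = e := by
    refine hemin _ hers ?_ ?_ ?_
    · rw [← hassoc _ hers _ heS _ hrS, hassoc _ heS _ hrS _ heS, hre, hassoc _ heS _ hrS _ hrS,
        hrr]
    · rw [hassoc _ heS _ hrS _ heS, hre]
    · rw [← hassoc _ heS _ heS _ hrS, he]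
  calc b = m e b := heb.symm
    _ = m (m e r) b := by rw [her]
    _ = m e r := by rw [hassoc _ heS _ hrS _ hbS, hrb]
    _ = e := her

/-- Marrakchi's result: if e is a minimal idempotent of a compact affine right
topological semigroup S, then e*x*e = e for all x ∈ S. -/
theorem stmt_11 {V : Type*} [AddCommGroup V] [Module ℝ V] [TopologicalSpace V]
    [IsTopologicalAddGroup V] [ContinuousSMul ℝ V] [T2Space V]
    [LocallyConvexSpace ℝ V]
    (S : Set V) (hScomp : IsCompact S) (hSconv : Convex ℝ S)
    (hSne : S.Nonempty)
    (m : V → V → V)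
    (hmem : ∀ x ∈ S, ∀ y ∈ S, m x y ∈ S)
    (hassoc : ∀ x ∈ S, ∀ y ∈ S, ∀ z ∈ S, m (m x y) z = m x (m y z))
    (haff : ∀ y ∈ S, ∀ a b : ℝ, 0 ≤ a → 0 ≤ b → a + b = 1 →
      ∀ x ∈ S, ∀ x' ∈ S, m (a • x + b • x') y = a • m x y + b • m x' y)
    (hcont : ∀ y ∈ S, ContinuousOn (fun x => m x y) S)
    (e : V) (heS : e ∈ S) (he : m e e = e)
    (hemin : ∀ g ∈ S, m g g = g → m g e = g → m e g = g → g = e) :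
    ∀ x ∈ S, m (m e x) e = e :=
  stmt_11_general S hScomp hSconv m hmem hassoc haff hcont e heS he hemin
end

section
/- Let S be a compact affine right topological semigroup and f a minimal idempotent. Then S*f is a minimal closed left ideal of S. -/
/-!
An idempotent `e` lying in a left ideal `J ⊆ S f` satisfies `e f = e`, so `f e` is an idempotent
below `f`; minimality forces `f e = f`, whence every `x f = (x f) e` lies in `J`. A nonempty closed
left ideal is a compact subsemigroup, so by the Ellis–Numakura lemma it does contain an idempotent.
-/

section Semigroup

variable {M : Type*} [Semigroup M]

/-- Minimality for the order `g ≤ f ↔ g * f = f * g = g` on idempotents. -/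
def IsMinimalIdempotent (f : M) : Prop :=
  IsIdempotentElem f ∧ ∀ g : M, IsIdempotentElem g → g * f = g → f * g = g → g = f

theorem IsMinimalIdempotent.mul_eq_self_of_mul_eq {f e : M} (hf : IsMinimalIdempotent f)
    (he : IsIdempotentElem e) (hef : e * f = e) : f * e = f := by
  refine hf.2 (f * e) ?_ ?_ ?_
  · change f * e * (f * e) = f * e
    rw [mul_assoc, ← mul_assoc e, hef, he.eq]
  · rw [mul_assoc, hef]
  · rw [← mul_assoc, hf.1.eq]

theorem IsMinimalIdempotent.range_mul_right_subset {f e : M} {J : Set M}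
    (hf : IsMinimalIdempotent f) (hJ : ∀ x, ∀ j ∈ J, x * j ∈ J) (heJ : e ∈ J)
    (he : IsIdempotentElem e) (hef : e * f = e) : Set.range (· * f) ⊆ J := by
  rintro _ ⟨x, rfl⟩
  have hfe : x * f = x * f * e := by rw [mul_assoc, hf.mul_eq_self_of_mul_eq he hef]
  simpa only [← hfe] using hJ (x * f) e heJ

theorem IsMinimalIdempotent.eq_range_mul_right [TopologicalSpace M] [T2Space M] [CompactSpace M]
    (hc : ∀ r : M, Continuous (· * r)) {f : M} (hf : IsMinimalIdempotent f) {J : Set M}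
    (hJf : J ⊆ Set.range (· * f)) (hJ : IsClosed J) (hJne : J.Nonempty)
    (hJideal : ∀ x, ∀ j ∈ J, x * j ∈ J) : J = Set.range (· * f) := by
  obtain ⟨e, heJ, he⟩ := exists_idempotent_in_compact_subsemigroup hc J hJne hJ.isCompact
    fun x _ y hy => hJideal x y hy
  obtain ⟨y, rfl⟩ := hJf heJ
  have hef : y * f * f = y * f := by rw [mul_assoc, hf.1.eq]
  exact hJf.antisymm (hf.range_mul_right_subset hJideal heJ he hef)

end Semigroup

section SetSemigroup

variable {V : Type*} {S : Set V} {m : V → V → V}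

abbrev Set.semigroupOfAssoc (S : Set V) (m : V → V → V) (hmem : ∀ x ∈ S, ∀ y ∈ S, m x y ∈ S)
    (hassoc : ∀ x ∈ S, ∀ y ∈ S, ∀ z ∈ S, m (m x y) z = m x (m y z)) : Semigroup S where
  mul x y := ⟨m x y, hmem x x.2 y y.2⟩
  mul_assoc x y z := Subtype.ext (hassoc x x.2 y y.2 z z.2)

theorem Set.image_val_range_mul_right_semigroupOfAssoc (hmem : ∀ x ∈ S, ∀ y ∈ S, m x y ∈ S)
    (hassoc : ∀ x ∈ S, ∀ y ∈ S, ∀ z ∈ S, m (m x y) z = m x (m y z)) {f : V} (hfS : f ∈ S) :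
    letI := S.semigroupOfAssoc m hmem hassoc
    Subtype.val '' Set.range (· * (⟨f, hfS⟩ : S)) = {z : V | ∃ x ∈ S, m x f = z} := by
  ext z
  constructor
  · rintro ⟨_, ⟨x, rfl⟩, rfl⟩
    exact ⟨x, x.2, rfl⟩
  · rintro ⟨x, hx, rfl⟩
    exact ⟨_, ⟨⟨x, hx⟩, rfl⟩, rfl⟩

theorem Set.continuous_mul_right_semigroupOfAssoc [TopologicalSpace V]
    (hmem : ∀ x ∈ S, ∀ y ∈ S, m x y ∈ S)
    (hassoc : ∀ x ∈ S, ∀ y ∈ S, ∀ z ∈ S, m (m x y) z = m x (m y z))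
    (hcont : ∀ y ∈ S, ContinuousOn (fun x => m x y) S) :
    letI := S.semigroupOfAssoc m hmem hassoc
    ∀ r : S, Continuous (· * r) := fun r =>
  ((hcont r r.2).comp_continuous continuous_subtype_val Subtype.prop).subtype_mk _

end SetSemigroup

theorem stmt_12_general {V : Type*} [TopologicalSpace V] [T2Space V]
    (S : Set V) (hScomp : IsCompact S)
    (m : V → V → V)
    (hmem : ∀ x ∈ S, ∀ y ∈ S, m x y ∈ S)
    (hassoc : ∀ x ∈ S, ∀ y ∈ S, ∀ z ∈ S, m (m x y) z = m x (m y z))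
    (hcont : ∀ y ∈ S, ContinuousOn (fun x => m x y) S)
    (f : V) (hfS : f ∈ S) (hf : m f f = f)
    (hfmin : ∀ g ∈ S, m g g = g → m g f = g → m f g = g → g = f) :
    IsClosed {z : V | ∃ x ∈ S, m x f = z} ∧
    {z : V | ∃ x ∈ S, m x f = z}.Nonempty ∧
    {z : V | ∃ x ∈ S, m x f = z} ⊆ S ∧
    (∀ x ∈ S, ∀ j ∈ {z : V | ∃ x ∈ S, m x f = z}, m x j ∈ {z : V | ∃ x ∈ S, m x f = z}) ∧
    (∀ J' : Set V, J' ⊆ {z : V | ∃ x ∈ S, m x f = z} → IsClosed J' → J'.Nonempty →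
      (∀ x ∈ S, ∀ j ∈ J', m x j ∈ J') → J' = {z : V | ∃ x ∈ S, m x f = z}) := by
  let := S.semigroupOfAssoc m hmem hassoc
  have : CompactSpace S := isCompact_iff_compactSpace.mp hScomp
  set f' : S := ⟨f, hfS⟩
  have hc := S.continuous_mul_right_semigroupOfAssoc hmem hassoc hcont
  have hf'min : IsMinimalIdempotent f' :=
    ⟨Subtype.ext hf, fun g hg hgf hfg =>
      Subtype.ext (hfmin g g.2 (congrArg Subtype.val hg) (congrArg Subtype.val hgf)
        (congrArg Subtype.val hfg))⟩
  rw [← S.image_val_range_mul_right_semigroupOfAssoc hmem hassoc hfS]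
  have hLS : Subtype.val '' Set.range (· * f') ⊆ S := by simp
  refine ⟨((isCompact_range (hc f')).image continuous_subtype_val).isClosed,
    ⟨f, f', ⟨f', Subtype.ext hf⟩, rfl⟩, hLS, ?_, fun J hJL hJ hJne hJideal => ?_⟩
  · rintro x hx _ ⟨_, ⟨a, rfl⟩, rfl⟩
    exact ⟨_, ⟨⟨x, hx⟩ * a, rfl⟩, hassoc x hx a a.2 f hfS⟩
  have hJS : J ⊆ Set.range ((↑) : S → V) := Subtype.range_coe ▸ hJL.trans hLS
  obtain ⟨_, hj⟩ := hJne
  obtain ⟨j, rfl⟩ := hJS hj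
  have hJ' := hf'min.eq_range_mul_right hc
    ((Set.preimage_mono hJL).trans (Set.preimage_image_eq _ Subtype.val_injective).subset)
    (hJ.preimage continuous_subtype_val) ⟨j, hj⟩ fun x j hj => hJideal x x.2 j hj
  rw [← hJ', Set.image_preimage_eq_of_subset hJS]

/-- If f is a minimal idempotent of a compact affine right topological
semigroup S, then S*f is a minimal closed left ideal of S. -/
theorem stmt_12 {V : Type*} [AddCommGroup V] [Module ℝ V] [TopologicalSpace V]
    [IsTopologicalAddGroup V] [ContinuousSMul ℝ V] [T2Space V]
    [LocallyConvexSpace ℝ V]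
    (S : Set V) (hScomp : IsCompact S) (hSconv : Convex ℝ S)
    (hSne : S.Nonempty)
    (m : V → V → V)
    (hmem : ∀ x ∈ S, ∀ y ∈ S, m x y ∈ S)
    (hassoc : ∀ x ∈ S, ∀ y ∈ S, ∀ z ∈ S, m (m x y) z = m x (m y z))
    (haff : ∀ y ∈ S, ∀ a b : ℝ, 0 ≤ a → 0 ≤ b → a + b = 1 →
      ∀ x ∈ S, ∀ x' ∈ S, m (a • x + b • x') y = a • m x y + b • m x' y)
    (hcont : ∀ y ∈ S, ContinuousOn (fun x => m x y) S)
    (f : V) (hfS : f ∈ S) (hf : m f f = f)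
    (hfmin : ∀ g ∈ S, m g g = g → m g f = g → m f g = g → g = f) :
    IsClosed {z : V | ∃ x ∈ S, m x f = z} ∧
    {z : V | ∃ x ∈ S, m x f = z}.Nonempty ∧
    {z : V | ∃ x ∈ S, m x f = z} ⊆ S ∧
    (∀ x ∈ S, ∀ j ∈ {z : V | ∃ x ∈ S, m x f = z}, m x j ∈ {z : V | ∃ x ∈ S, m x f = z}) ∧
    (∀ J' : Set V, J' ⊆ {z : V | ∃ x ∈ S, m x f = z} → IsClosed J' → J'.Nonempty →
      (∀ x ∈ S, ∀ j ∈ J', m x j ∈ J') → J' = {z : V | ∃ x ∈ S, m x f = z}) :=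
  stmt_12_general S hScomp m hmem hassoc hcont f hfS hf hfmin
end

section
/- Let X = Y* be a dual Banach space and E ⊆ X a closed subspace. The set S of all linear contractions φ : X → X with φ(x) = x for all x ∈ E is a closed convex subsemigroup of C(X) in the pointwise-weak* topology, and hence (being compact) contains a minimal idempotent φ. The range φ(X) then equals the fixed point set of φ and contains E. -/
/-!
Under the pointwise weak* topology, the linear contractions of `X = Y*` fixing `E` form a compact
Hausdorff semigroup `K` (Banach–Alaoglu and Tychonoff) in which right multiplication is
continuous. In such a semigroup, Zorn's lemma yields a minimal closed left ideal `L`; it contains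
an idempotent `e` by the Ellis–Numakura lemma, and `K * g = L` for every `g ∈ L` by minimality.
If `g` is an idempotent with `g * e = g = e * g`, then `g ∈ L`, so `e = k * g` for some `k`,
whence `e = e * g = g`.
-/

open Set Topology

section MinimalIdempotent

variable {M : Type*} [Semigroup M] [TopologicalSpace M]

def IsClosedLeftIdealOf (K L : Set M) : Prop :=
  L.Nonempty ∧ L ⊆ K ∧ IsClosed L ∧ ∀ k ∈ K, ∀ l ∈ L, k * l ∈ L

variable [T2Space M] {K : Set M}

theorem exists_minimal_isClosedLeftIdealOf (hne : K.Nonempty) (hK : IsCompact K)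
    (hmul : ∀ x ∈ K, ∀ y ∈ K, x * y ∈ K) : ∃ L, Minimal (IsClosedLeftIdealOf K) L := by
  have hKideal : IsClosedLeftIdealOf K K := ⟨hne, Subset.rfl, hK.isClosed, hmul⟩
  suffices hchains : ∀ c ⊆ {L | IsClosedLeftIdealOf K L}, IsChain (· ⊆ ·) c → c.Nonempty →
      ∃ lb ∈ {L | IsClosedLeftIdealOf K L}, ∀ L ∈ c, lb ⊆ L by
    obtain ⟨L, -, hL⟩ := zorn_superset_nonempty _ hchains K hKideal
    exact ⟨L, hL⟩
  intro c hc hchain ⟨L₀, hL₀⟩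
  have : Nonempty c := ⟨⟨L₀, hL₀⟩⟩
  have hdirected : DirectedOn (· ⊇ ·) c := fun L hL L' hL' =>
    (hchain.total hL hL').elim (fun h => ⟨L, hL, Subset.rfl, h⟩) fun h => ⟨L', hL', h, Subset.rfl⟩
  refine ⟨⋂₀ c, ⟨?_, ?_, isClosed_sInter fun L hL => (hc hL).2.2.1, ?_⟩,
    fun L hL => sInter_subset_of_mem hL⟩
  · exact IsCompact.nonempty_sInter_of_directed_nonempty_isCompact_isClosed
      hdirected (fun L hL => (hc hL).1)
      (fun L hL => hK.of_isClosed_subset (hc hL).2.2.1 (hc hL).2.1) (fun L hL => (hc hL).2.2.1)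
  · exact (sInter_subset_of_mem hL₀).trans (hc hL₀).2.1
  · exact fun k hk l hl L hL => (hc hL).2.2.2 k hk l (hl L hL)

theorem image_mul_const_eq_of_minimal (continuous_mul_const : ∀ r : M, Continuous (· * r))
    {L : Set M} (hK : IsCompact K)
    (hmul : ∀ x ∈ K, ∀ y ∈ K, x * y ∈ K) (hL : Minimal (IsClosedLeftIdealOf K) L) {t : M}
    (ht : t ∈ L) : (· * t) '' K = L := by
  obtain ⟨-, hLK, -, hLideal⟩ := hL.prop
  have hsub : (· * t) '' K ⊆ L := image_subset_iff.2 fun k hk => hLideal k hk t ht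
  refine hL.eq_of_subset ⟨⟨_, mem_image_of_mem _ (hLK ht)⟩, hsub.trans hLK,
    (hK.image (continuous_mul_const t)).isClosed, ?_⟩ hsub
  rintro k hk _ ⟨k', hk', rfl⟩
  exact ⟨k * k', hmul k hk k' hk', mul_assoc k k' t⟩

theorem exists_minimal_idempotent_of_isCompact
    (continuous_mul_const : ∀ r : M, Continuous (· * r)) (hne : K.Nonempty) (hK : IsCompact K)
    (hmul : ∀ x ∈ K, ∀ y ∈ K, x * y ∈ K) :
    ∃ e ∈ K, e * e = e ∧ ∀ g ∈ K, g * g = g → g * e = g → e * g = g → g = e := by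
  obtain ⟨L, hL⟩ := exists_minimal_isClosedLeftIdealOf hne hK hmul
  obtain ⟨hLne, hLK, hLclosed, hLideal⟩ := hL.prop
  obtain ⟨e, heL, hee⟩ := exists_idempotent_in_compact_subsemigroup continuous_mul_const L hLne
    (hK.of_isClosed_subset hLclosed hLK) fun x hx y hy => hLideal x (hLK hx) y hy
  refine ⟨e, hLK heL, hee, fun g hgK hgg hge heg => ?_⟩
  have hgL : g ∈ L := hge ▸ hLideal g hgK e heL
  obtain ⟨k, -, hkg⟩ : e ∈ (· * g) '' K :=
    (image_mul_const_eq_of_minimal continuous_mul_const hK hmul hL hgL).symm ▸ heL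
  calc g = e * g := heg.symm
    _ = e := by rw [← hkg, mul_assoc, hgg]

end MinimalIdempotent

section Contractions

variable {R X : Type*} [Semiring R] [SeminormedAddCommGroup X] [Module R X]

variable (R) in
def contractionsFixing (E : Set X) : Set (X →ₗ[R] X) :=
  {T | (∀ x, ‖T x‖ ≤ ‖x‖) ∧ ∀ x ∈ E, T x = x}

theorem comp_mem_contractionsFixing {E : Set X} {T T' : X →ₗ[R] X}
    (hT : T ∈ contractionsFixing R E) (hT' : T' ∈ contractionsFixing R E) :
    T.comp T' ∈ contractionsFixing R E :=
  ⟨fun x => (hT.1 (T' x)).trans (hT'.1 x), fun x hx => by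
    rw [LinearMap.comp_apply, hT'.2 x hx, hT.2 x hx]⟩

theorem convex_contractionsFixing [NormedSpace ℝ X] (E : Set X) :
    Convex ℝ (contractionsFixing ℝ E) := by
  intro T hT T' hT' a b ha hb hab
  refine ⟨fun x => ?_, fun x hx => ?_⟩
  · calc ‖a • T x + b • T' x‖ ≤ a * ‖T x‖ + b * ‖T' x‖ := by
          simpa only [norm_smul, Real.norm_of_nonneg ha, Real.norm_of_nonneg hb]
            using norm_add_le (a • T x) (b • T' x)
      _ ≤ a * ‖x‖ + b * ‖x‖ := by gcongr <;> [exact hT.1 x; exact hT'.1 x]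
      _ = ‖x‖ := by rw [← add_mul, hab, one_mul]
  · change a • T x + b • T' x = x
    rw [hT.2 x hx, hT'.2 x hx, ← add_smul, hab, one_smul]

end Contractions

noncomputable section WeakStar

variable {Y : Type*} [NormedAddCommGroup Y] [NormedSpace ℝ Y]

def toWeakStarPi (T : Module.End ℝ (StrongDual ℝ Y)) : StrongDual ℝ Y → WeakDual ℝ Y :=
  fun x => StrongDual.toWeakDual (T x)

theorem toWeakStarPi_injective : Function.Injective (toWeakStarPi (Y := Y)) :=
  fun _ _ h => LinearMap.ext fun x => congrFun h x

def weakStarConstraint (E : Set (StrongDual ℝ Y)) (x : StrongDual ℝ Y) : Set (WeakDual ℝ Y) :=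
  {w | ‖WeakDual.toStrongDual w‖ ≤ ‖x‖ ∧ (x ∈ E → w = StrongDual.toWeakDual x)}

theorem isCompact_weakStarConstraint (E : Set (StrongDual ℝ Y)) (x : StrongDual ℝ Y) :
    IsCompact (weakStarConstraint E x) := by
  have hball := WeakDual.isCompact_closedBall (𝕜 := ℝ) (E := Y) 0 ‖x‖
  simp only [Metric.closedBall, dist_zero_right] at hball
  exact hball.inter_right (isClosed_imp isOpen_const (isClosed_eq continuous_id continuous_const))

theorem image_toWeakStarPi_contractionsFixing (E : Set (StrongDual ℝ Y)) :
    toWeakStarPi '' contractionsFixing ℝ E =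
      range ((⇑) : (StrongDual ℝ Y →ₗ[ℝ] WeakDual ℝ Y) → _) ∩ univ.pi (weakStarConstraint E) := by
  ext f
  constructor
  · rintro ⟨T, hT, rfl⟩
    exact ⟨⟨StrongDual.toWeakDual.toLinearMap ∘ₗ T, rfl⟩,
      fun x _ => ⟨hT.1 x, fun hx => congrArg StrongDual.toWeakDual (hT.2 x hx)⟩⟩
  · rintro ⟨⟨L, rfl⟩, hL⟩
    exact ⟨WeakDual.toStrongDual.toLinearMap ∘ₗ L,
      ⟨fun x => (hL x trivial).1, fun x hx => (hL x trivial).2 hx⟩, rfl⟩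

theorem isCompact_image_toWeakStarPi (E : Set (StrongDual ℝ Y)) :
    IsCompact (toWeakStarPi '' contractionsFixing ℝ E) := by
  rw [image_toWeakStarPi_contractionsFixing]
  exact (isCompact_univ_pi (isCompact_weakStarConstraint E)).inter_left
    (LinearMap.isClosed_range_coe _ _ _)

-- The pointwise norm topology is finer than the pointwise weak* one.
theorem isClosed_image_coeFn_contractionsFixing (E : Set (StrongDual ℝ Y)) :
    IsClosed ((⇑) '' contractionsFixing ℝ E : Set (StrongDual ℝ Y → StrongDual ℝ Y)) := by
  have hpreimage : (⇑) '' contractionsFixing ℝ E =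
      (fun f x => StrongDual.toWeakDual (f x)) ⁻¹' (toWeakStarPi '' contractionsFixing ℝ E) := by
    ext f
    constructor
    · rintro ⟨T, hT, rfl⟩
      exact ⟨T, hT, rfl⟩
    · rintro ⟨T, hT, hTf⟩
      exact ⟨T, hT, funext fun x => congrFun hTf x⟩
  rw [hpreimage]
  exact (isCompact_image_toWeakStarPi E).isClosed.preimage <| continuous_pi fun x =>
    NormedSpace.Dual.toWeakDual_continuous.comp (continuous_apply x)

local instance : TopologicalSpace (Module.End ℝ (StrongDual ℝ Y)) :=
  .induced toWeakStarPi inferInstance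

theorem isEmbedding_toWeakStarPi : IsEmbedding (toWeakStarPi (Y := Y)) :=
  toWeakStarPi_injective.isEmbedding_induced

theorem continuous_mul_const_weakStar (T : Module.End ℝ (StrongDual ℝ Y)) :
    Continuous (· * T) :=
  continuous_induced_rng.2 <| continuous_pi fun x =>
    (continuous_apply (T x)).comp (continuous_induced_dom (f := toWeakStarPi))

theorem exists_minimal_idempotent_mem_contractionsFixing (E : Set (StrongDual ℝ Y)) :
    ∃ φ ∈ contractionsFixing ℝ E, φ * φ = φ ∧ ∀ ψ ∈ contractionsFixing ℝ E,
      ψ * ψ = ψ → ψ * φ = ψ → φ * ψ = ψ → ψ = φ :=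
  haveI := isEmbedding_toWeakStarPi.t2Space (X := Module.End ℝ (StrongDual ℝ Y))
  exists_minimal_idempotent_of_isCompact continuous_mul_const_weakStar
    ⟨1, fun _ => le_rfl, fun _ _ => rfl⟩
    (isEmbedding_toWeakStarPi.isCompact_iff.2 (isCompact_image_toWeakStarPi E))
    fun _ hT _ hT' => comp_mem_contractionsFixing hT hT'

end WeakStar

theorem stmt_15_general (Y : Type*) [NormedAddCommGroup Y] [NormedSpace ℝ Y]
    (E : Submodule ℝ (Y →L[ℝ] ℝ)) :
    IsClosed ((fun (T : (Y →L[ℝ] ℝ) →ₗ[ℝ] (Y →L[ℝ] ℝ)) (x : Y →L[ℝ] ℝ) =>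
        (T x : WeakDual ℝ Y)) ''
      {T | (∀ x, ‖T x‖ ≤ ‖x‖) ∧ ∀ x ∈ E, T x = x}) ∧
    Convex ℝ {T : (Y →L[ℝ] ℝ) →ₗ[ℝ] (Y →L[ℝ] ℝ) |
      (∀ x, ‖T x‖ ≤ ‖x‖) ∧ ∀ x ∈ E, T x = x} ∧
    (∀ T T' : (Y →L[ℝ] ℝ) →ₗ[ℝ] (Y →L[ℝ] ℝ),
      ((∀ x, ‖T x‖ ≤ ‖x‖) ∧ ∀ x ∈ E, T x = x) →
      ((∀ x, ‖T' x‖ ≤ ‖x‖) ∧ ∀ x ∈ E, T' x = x) →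
      ((∀ x, ‖T.comp T' x‖ ≤ ‖x‖) ∧ ∀ x ∈ E, T.comp T' x = x)) ∧
    ∃ φ : (Y →L[ℝ] ℝ) →ₗ[ℝ] (Y →L[ℝ] ℝ),
      (∀ x, ‖φ x‖ ≤ ‖x‖) ∧ (∀ x ∈ E, φ x = x) ∧
      φ.comp φ = φ ∧
      (∀ ψ : (Y →L[ℝ] ℝ) →ₗ[ℝ] (Y →L[ℝ] ℝ),
        (∀ x, ‖ψ x‖ ≤ ‖x‖) → (∀ x ∈ E, ψ x = x) → ψ.comp ψ = ψ →
        ψ.comp φ = ψ → φ.comp ψ = ψ → ψ = φ) ∧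
      LinearMap.range φ = {x : Y →L[ℝ] ℝ | φ x = x} ∧
      (E : Set (Y →L[ℝ] ℝ)) ⊆ LinearMap.range φ := by
  obtain ⟨φ, ⟨hφnorm, hφE⟩, hφφ, hφmin⟩ :=
    exists_minimal_idempotent_mem_contractionsFixing (E : Set (Y →L[ℝ] ℝ))
  have hφrange : ∀ x, x ∈ LinearMap.range φ ↔ φ x = x :=
    fun x => LinearMap.IsIdempotentElem.mem_range_iff hφφ
  refine ⟨isClosed_image_coeFn_contractionsFixing (E : Set (Y →L[ℝ] ℝ)),
    convex_contractionsFixing (E : Set (Y →L[ℝ] ℝ)),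
    fun T T' hT hT' => comp_mem_contractionsFixing hT hT',
    φ, hφnorm, hφE, hφφ, fun ψ hψnorm hψE => hφmin ψ ⟨hψnorm, hψE⟩, Set.ext hφrange,
    fun x hx => (hφrange x).2 (hφE x hx)⟩

/-- For a dual Banach space X = Y* and a closed subspace E ⊆ X, the set S of
linear contractions fixing E pointwise is a closed (in the pointwise weak*
topology) convex subsemigroup of the contractions, and contains a minimal
idempotent φ whose range equals its fixed-point set and contains E. -/
theorem stmt_15 (Y : Type*) [NormedAddCommGroup Y] [NormedSpace ℝ Y]
    [CompleteSpace Y] (E : Submodule ℝ (Y →L[ℝ] ℝ))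
    (hE : IsClosed (E : Set (Y →L[ℝ] ℝ))) :
    IsClosed ((fun (T : (Y →L[ℝ] ℝ) →ₗ[ℝ] (Y →L[ℝ] ℝ)) (x : Y →L[ℝ] ℝ) =>
        (T x : WeakDual ℝ Y)) ''
      {T | (∀ x, ‖T x‖ ≤ ‖x‖) ∧ ∀ x ∈ E, T x = x}) ∧
    Convex ℝ {T : (Y →L[ℝ] ℝ) →ₗ[ℝ] (Y →L[ℝ] ℝ) |
      (∀ x, ‖T x‖ ≤ ‖x‖) ∧ ∀ x ∈ E, T x = x} ∧
    (∀ T T' : (Y →L[ℝ] ℝ) →ₗ[ℝ] (Y →L[ℝ] ℝ),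
      ((∀ x, ‖T x‖ ≤ ‖x‖) ∧ ∀ x ∈ E, T x = x) →
      ((∀ x, ‖T' x‖ ≤ ‖x‖) ∧ ∀ x ∈ E, T' x = x) →
      ((∀ x, ‖T.comp T' x‖ ≤ ‖x‖) ∧ ∀ x ∈ E, T.comp T' x = x)) ∧
    ∃ φ : (Y →L[ℝ] ℝ) →ₗ[ℝ] (Y →L[ℝ] ℝ),
      (∀ x, ‖φ x‖ ≤ ‖x‖) ∧ (∀ x ∈ E, φ x = x) ∧
      φ.comp φ = φ ∧
      (∀ ψ : (Y →L[ℝ] ℝ) →ₗ[ℝ] (Y →L[ℝ] ℝ),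
        (∀ x, ‖ψ x‖ ≤ ‖x‖) → (∀ x ∈ E, ψ x = x) → ψ.comp ψ = ψ →
        ψ.comp φ = ψ → φ.comp ψ = ψ → ψ = φ) ∧
      LinearMap.range φ = {x : Y →L[ℝ] ℝ | φ x = x} ∧
      (E : Set (Y →L[ℝ] ℝ)) ⊆ LinearMap.range φ :=
  stmt_15_general Y E
end
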